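/- arXiv:1603.03352 — 5 statements merged into one kernel-verified Lean document; each statement's English description precedes it below -/
import Mathlib

section
/- Positivity of the explicit finite-difference scheme (Lemma 2.1): Assume P_{i,j} ≥ 0 for all i ∈ {1,…,Nx} and all j, that c ≥ 0 and c + α_j ≥ 0 for all j, and that the CFL condition dt·( 2(1/dx² + 1/dy²)·m·P_{i,j} + (c + α_j)/dx ) ≤ 1 holds for all 2 ≤ i ≤ Nx−1 and all j. Define Q by the interior scheme update for 2 ≤ i ≤ Nx−1, by the Dirichlet condition Q_{1,j} = 0 on the left boundary, and by the Neumann condition Q_{Nx,j} = Q_{Nx−1,j} + c·dx on the right boundary. Then Q_{i,j} ≥ 0 for all i ∈ {1,…,Nx} and all j. -/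
/-- The interior finite-difference update of the scheme (S):
`Q i j = P i j + dt·[ m·P i j·(Δ²ₓₓP + Δ²ᵧᵧP) − (c+α j)·Δ⁻ₓP + (ΔₓP)² + (ΔᵧP)² ]`,
with periodicity in the second index realized via `ZMod Ny`. -/
noncomputable def schemeUpdate (dx dy dt m c : ℝ) {Ny : ℕ} (α : ZMod Ny → ℝ)
    (P : ℤ → ZMod Ny → ℝ) (i : ℤ) (j : ZMod Ny) : ℝ :=
  P i j + dt * (m * P i j *
        ((P (i + 1) j + P (i - 1) j - 2 * P i j) / dx ^ 2
          + (P i (j + 1) + P i (j - 1) - 2 * P i j) / dy ^ 2)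
      - (c + α j) * (P i j - P (i - 1) j) / dx
      + (((P (i + 1) j - P (i - 1) j) / (2 * dx)) ^ 2
          + ((P i (j + 1) - P i (j - 1)) / (2 * dy)) ^ 2))

/-- Positivity of the explicit finite-difference scheme (Lemma 2.1):
if `P ≥ 0` on `{1,…,Nx} × ℤ/Nyℤ`, `c ≥ 0`, `c + α j ≥ 0`, and the CFL condition
holds at every interior node, then the updated field `Q` (interior scheme update,
Dirichlet `Q 1 j = 0` on the left, Neumann `Q Nx j = Q (Nx−1) j + c·dx` on the right)
is nonnegative on `{1,…,Nx} × ℤ/Nyℤ`. -/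
theorem scheme_positivity (dx dy dt m c : ℝ) (hdx : 0 < dx) (hdy : 0 < dy)
    (hdt : 0 < dt) (hm : 0 < m) (Nx : ℤ) (hNx : 3 ≤ Nx) (Ny : ℕ) (hNy : 1 ≤ Ny)
    (α : ZMod Ny → ℝ) (P Q : ℤ → ZMod Ny → ℝ)
    (hc : 0 ≤ c) (hα : ∀ j : ZMod Ny, 0 ≤ c + α j)
    (hP : ∀ (i : ℤ) (j : ZMod Ny), 1 ≤ i → i ≤ Nx → 0 ≤ P i j)
    (hCFL : ∀ (i : ℤ) (j : ZMod Ny), 2 ≤ i → i ≤ Nx - 1 →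
      dt * (2 * (1 / dx ^ 2 + 1 / dy ^ 2) * m * P i j + (c + α j) / dx) ≤ 1)
    (hQint : ∀ (i : ℤ) (j : ZMod Ny), 2 ≤ i → i ≤ Nx - 1 →
      Q i j = schemeUpdate dx dy dt m c α P i j)
    (hQleft : ∀ j : ZMod Ny, Q 1 j = 0)
    (hQright : ∀ j : ZMod Ny, Q Nx j = Q (Nx - 1) j + c * dx) :
    ∀ (i : ℤ) (j : ZMod Ny), 1 ≤ i → i ≤ Nx → 0 ≤ Q i j := by
  have interior : ∀ (i : ℤ) (j : ZMod Ny), 2 ≤ i → i ≤ Nx - 1 → 0 ≤ Q i j := by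
    intro i j h2 hle
    rw [hQint i j h2 hle]
    unfold schemeUpdate
    have ha : 0 ≤ P i j := hP i j (by omega) (by omega)
    have hb : 0 ≤ P (i + 1) j := hP _ j (by omega) (by omega)
    have hd : 0 ≤ P (i - 1) j := hP _ j (by omega) (by omega)
    have he : 0 ≤ P i (j + 1) := hP i _ (by omega) (by omega)
    have hf : 0 ≤ P i (j - 1) := hP i _ (by omega) (by omega)
    have hk : 0 ≤ c + α j := hα j
    have hcfl := hCFL i j h2 hle
    have t1 : 0 ≤ P i j * (1 - dt * (2 * (1 / dx ^ 2 + 1 / dy ^ 2) * m * P i j + (c + α j) / dx)) :=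
      mul_nonneg ha (by linarith)
    have hx2 : (0:ℝ) ≤ dx ^ 2 := sq_nonneg dx
    have hy2 : (0:ℝ) ≤ dy ^ 2 := sq_nonneg dy
    have t2 : 0 ≤ dt * (m * P i j * (P (i + 1) j / dx ^ 2)) :=
      mul_nonneg hdt.le (mul_nonneg (mul_nonneg hm.le ha) (div_nonneg hb hx2))
    have t3 : 0 ≤ dt * (m * P i j * (P (i - 1) j / dx ^ 2)) :=
      mul_nonneg hdt.le (mul_nonneg (mul_nonneg hm.le ha) (div_nonneg hd hx2))
    have t4 : 0 ≤ dt * (m * P i j * (P i (j + 1) / dy ^ 2)) :=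
      mul_nonneg hdt.le (mul_nonneg (mul_nonneg hm.le ha) (div_nonneg he hy2))
    have t5 : 0 ≤ dt * (m * P i j * (P i (j - 1) / dy ^ 2)) :=
      mul_nonneg hdt.le (mul_nonneg (mul_nonneg hm.le ha) (div_nonneg hf hy2))
    have t6 : 0 ≤ dt * ((c + α j) * (P (i - 1) j / dx)) :=
      mul_nonneg hdt.le (mul_nonneg hk (div_nonneg hd hdx.le))
    have t7 : 0 ≤ dt * (((P (i + 1) j - P (i - 1) j) / (2 * dx)) ^ 2) :=
      mul_nonneg hdt.le (sq_nonneg _)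
    have t8 : 0 ≤ dt * (((P i (j + 1) - P i (j - 1)) / (2 * dy)) ^ 2) :=
      mul_nonneg hdt.le (sq_nonneg _)
    have key : P i j + dt * (m * P i j *
          ((P (i + 1) j + P (i - 1) j - 2 * P i j) / dx ^ 2
            + (P i (j + 1) + P i (j - 1) - 2 * P i j) / dy ^ 2)
        - (c + α j) * (P i j - P (i - 1) j) / dx
        + (((P (i + 1) j - P (i - 1) j) / (2 * dx)) ^ 2
            + ((P i (j + 1) - P i (j - 1)) / (2 * dy)) ^ 2))
        = P i j * (1 - dt * (2 * (1 / dx ^ 2 + 1 / dy ^ 2) * m * P i j + (c + α j) / dx))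
          + dt * (m * P i j * (P (i + 1) j / dx ^ 2))
          + dt * (m * P i j * (P (i - 1) j / dx ^ 2))
          + dt * (m * P i j * (P i (j + 1) / dy ^ 2))
          + dt * (m * P i j * (P i (j - 1) / dy ^ 2))
          + dt * ((c + α j) * (P (i - 1) j / dx))
          + dt * (((P (i + 1) j - P (i - 1) j) / (2 * dx)) ^ 2)
          + dt * (((P i (j + 1) - P i (j - 1)) / (2 * dy)) ^ 2) := by ring
    rw [key]
    linarith [t1, t2, t3, t4, t5, t6, t7, t8]
  intro i j h1 hi
  rcases eq_or_lt_of_le h1 with h | h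
  · rw [← h, hQleft j]
  rcases eq_or_lt_of_le hi with h' | h'
  · rw [h', hQright j]
    have := interior (Nx - 1) j (by omega) (by omega)
    nlinarith
  · exact interior i j (by omega) (by omega)
end

section
/- Interior positivity of the scheme update: Fix 2 ≤ i ≤ Nx−1 and j. Assume P_{k,l} ≥ 0 for the five indices (k,l) ∈ {(i,j), (i±1,j), (i,j±1)}, that c + α_j ≥ 0, and that the pointwise CFL condition dt·( 2(1/dx² + 1/dy²)·m·P_{i,j} + (c + α_j)/dx ) ≤ 1 holds. Then the updated value Q_{i,j} given by the interior scheme update satisfies Q_{i,j} ≥ 0; more precisely, Q_{i,j} is bounded below by a linear combination of P_{i,j}, P_{i±1,j}, P_{i,j±1} with nonnegative coefficients. -/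
/-- Interior positivity of the scheme update: at a fixed interior node `(i,j)`,
if the five stencil values of `P` are nonnegative, `c + α j ≥ 0`, and the pointwise
CFL condition holds, then the updated value is bounded below by a linear combination
of the five stencil values with nonnegative coefficients; in particular it is
nonnegative. -/
theorem scheme_interior_positivity (dx dy dt m c : ℝ) (hdx : 0 < dx) (hdy : 0 < dy)
    (hdt : 0 < dt) (hm : 0 < m) (Nx : ℤ) (hNx : 3 ≤ Nx) (Ny : ℕ) (hNy : 1 ≤ Ny)
    (α : ZMod Ny → ℝ) (P : ℤ → ZMod Ny → ℝ) (i : ℤ) (j : ZMod Ny)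
    (hi₁ : 2 ≤ i) (hi₂ : i ≤ Nx - 1)
    (hP₀ : 0 ≤ P i j) (hP₁ : 0 ≤ P (i + 1) j) (hP₂ : 0 ≤ P (i - 1) j)
    (hP₃ : 0 ≤ P i (j + 1)) (hP₄ : 0 ≤ P i (j - 1))
    (hα : 0 ≤ c + α j)
    (hCFL : dt * (2 * (1 / dx ^ 2 + 1 / dy ^ 2) * m * P i j + (c + α j) / dx) ≤ 1) :
    (∃ β₀ β₁ β₂ β₃ β₄ : ℝ, 0 ≤ β₀ ∧ 0 ≤ β₁ ∧ 0 ≤ β₂ ∧ 0 ≤ β₃ ∧ 0 ≤ β₄ ∧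
      β₀ * P i j + β₁ * P (i + 1) j + β₂ * P (i - 1) j
          + β₃ * P i (j + 1) + β₄ * P i (j - 1)
        ≤ schemeUpdate dx dy dt m c α P i j) ∧
    0 ≤ schemeUpdate dx dy dt m c α P i j := by
  set A := P i j with hA
  set B := P (i + 1) j with hB
  set C := P (i - 1) j with hC
  set D := P i (j + 1) with hD
  set E := P i (j - 1) with hE
  set K := c + α j with hK
  have hdx2 : (0:ℝ) < dx ^ 2 := by positivity
  have hdy2 : (0:ℝ) < dy ^ 2 := by positivity
  have hβ₀ : 0 ≤ 1 - dt * (2 * (1 / dx ^ 2 + 1 / dy ^ 2) * m * A + K / dx) := by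
    linarith
  have key : (1 - dt * (2 * (1 / dx ^ 2 + 1 / dy ^ 2) * m * A + K / dx)) * A
      + (dt * m * A / dx ^ 2) * B + (dt * m * A / dx ^ 2 + dt * K / dx) * C
      + (dt * m * A / dy ^ 2) * D + (dt * m * A / dy ^ 2) * E
      ≤ schemeUpdate dx dy dt m c α P i j := by
    unfold schemeUpdate
    rw [← hA, ← hB, ← hC, ← hD, ← hE, ← hK]
    have h1 : (0:ℝ) ≤ ((B - C) / (2 * dx)) ^ 2 := sq_nonneg _
    have h2 : (0:ℝ) ≤ ((D - E) / (2 * dy)) ^ 2 := sq_nonneg _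
    have : (1 - dt * (2 * (1 / dx ^ 2 + 1 / dy ^ 2) * m * A + K / dx)) * A
      + (dt * m * A / dx ^ 2) * B + (dt * m * A / dx ^ 2 + dt * K / dx) * C
      + (dt * m * A / dy ^ 2) * D + (dt * m * A / dy ^ 2) * E
      = A + dt * (m * A * ((B + C - 2 * A) / dx ^ 2 + (D + E - 2 * A) / dy ^ 2)
          - K * (A - C) / dx) := by
      field_simp
      ring
    have h3 : (0:ℝ) ≤ dt * (((B - C) / (2 * dx)) ^ 2 + ((D - E) / (2 * dy)) ^ 2) := by positivity
    nlinarith [this, h3]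
  have hβ₁ : (0:ℝ) ≤ dt * m * A / dx ^ 2 := by positivity
  have hβ₂ : (0:ℝ) ≤ dt * m * A / dx ^ 2 + dt * K / dx := by positivity
  have hβ₃ : (0:ℝ) ≤ dt * m * A / dy ^ 2 := by positivity
  refine ⟨⟨_, _, _, _, _, hβ₀, hβ₁, hβ₂, hβ₃, hβ₃, key⟩, ?_⟩
  calc (0:ℝ) ≤ _ := by positivity
    _ ≤ _ := key
end

section
/- Levelset equation for classical solutions (identity (4.2)): Let m > 0, c ∈ ℝ, α : ℝ → ℝ, ε > 0. Let X : ℝ → ℝ be twice differentiable at y₀, let p : ℝ² → ℝ be twice continuously differentiable in a neighborhood of (X(y₀), y₀), assume p(X(y), y) = ε for all y near y₀, and assume p satisfies the stationary equation −m·p·Δp + (c + α(y₀))·∂_x p = |∇p|² at the point (X(y₀), y₀). Then, writing D := ∂_x p(X(y₀),y₀) and evaluating all partial derivatives of p at (X(y₀), y₀), the following identity holds: m·ε·D·X''(y₀) − m·ε·[ ∂²_{xx} p·(1 − (X'(y₀))²) − 2·∂²_{xy} p·X'(y₀) ] + (c + α(y₀))·D = D²·(1 + (X'(y₀))²). -/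
/-!
Differentiating `p (X y, y) = ε` once gives `∂ₓp·X' + ∂ᵧp = 0` and twice gives
`∂²ₓₓp·X'² + 2·∂²ₓᵧp·X' + ∂²ᵧᵧp + ∂ₓp·X'' = 0` along the level curve. The second identity
eliminates `∂²ᵧᵧp` from the Laplacian and the first eliminates `∂ᵧp` from `|∇p|²`, which turns
the stationary equation at `(X(y₀), y₀)`, where `p = ε`, into the claimed identity.
-/

open Filter Topology

variable {𝕜 : Type*} [NontriviallyNormedField 𝕜]
  {F : Type*} [NormedAddCommGroup F] [NormedSpace 𝕜 F]

theorem ContinuousLinearMap.apply_pair (L : 𝕜 × 𝕜 →L[𝕜] F) (a b : 𝕜) :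
    L (a, b) = a • L (1, 0) + b • L (0, 1) := by
  rw [← map_smul, ← map_smul, ← map_add]
  simp

theorem ContinuousLinearMap.apply_pair_apply_pair (B : 𝕜 × 𝕜 →L[𝕜] 𝕜 × 𝕜 →L[𝕜] F)
    (a b c d : 𝕜) :
    B (a, b) (c, d) = (a * c) • B (1, 0) (1, 0) + (a * d) • B (1, 0) (0, 1)
      + (b * c) • B (0, 1) (1, 0) + (b * d) • B (0, 1) (0, 1) := by
  rw [B.apply_pair, add_apply, smul_apply, smul_apply, (B (1, 0)).apply_pair,
    (B (0, 1)).apply_pair]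
  simp only [smul_add, smul_smul]
  abel

theorem hasDerivAt_fderiv_comp_apply {E : Type*} [NormedAddCommGroup E] [NormedSpace 𝕜 E]
    {p : E → F} {γ v : 𝕜 → E} {w v' : E} {t : 𝕜}
    (hγ : HasDerivAt γ w t) (hv : HasDerivAt v v' t)
    (hp : DifferentiableAt 𝕜 (fderiv 𝕜 p) (γ t)) :
    HasDerivAt (fun s => fderiv 𝕜 p (γ s) (v s))
      (fderiv 𝕜 (fderiv 𝕜 p) (γ t) w (v t) + fderiv 𝕜 p (γ t) v') t :=
  (hp.hasFDerivAt.comp_hasDerivAt t hγ).clm_apply hv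

section PartialDerivatives

variable {p : 𝕜 × 𝕜 → F} {a b : 𝕜}

theorem hasDerivAt_partial_fst (hp : DifferentiableAt 𝕜 p (a, b)) :
    HasDerivAt (fun s => p (s, b)) (fderiv 𝕜 p (a, b) (1, 0)) a :=
  hp.hasFDerivAt.comp_hasDerivAt a ((hasDerivAt_id a).prodMk (hasDerivAt_const a b))

theorem hasDerivAt_partial_snd (hp : DifferentiableAt 𝕜 p (a, b)) :
    HasDerivAt (fun s => p (a, s)) (fderiv 𝕜 p (a, b) (0, 1)) b :=
  hp.hasFDerivAt.comp_hasDerivAt b ((hasDerivAt_const b a).prodMk (hasDerivAt_id b))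

variable (hp : ∀ᶠ z in 𝓝 (a, b), DifferentiableAt 𝕜 p z)
  (hp' : DifferentiableAt 𝕜 (fderiv 𝕜 p) (a, b))
include hp hp'

theorem deriv_partial_fst_fst :
    deriv (fun s => deriv (fun r => p (r, b)) s) a
      = fderiv 𝕜 (fderiv 𝕜 p) (a, b) (1, 0) (1, 0) := by
  have hslice : ∀ᶠ s in 𝓝 a, DifferentiableAt 𝕜 p (s, b) :=
    (Continuous.prodMk_left b).continuousAt.eventually hp
  have hpartial : (fun s => deriv (fun r => p (r, b)) s)
      =ᶠ[𝓝 a] fun s => fderiv 𝕜 p (s, b) (1, 0) :=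
    hslice.mono fun s hs => (hasDerivAt_partial_fst hs).deriv
  rw [hpartial.deriv_eq]
  simpa using (hasDerivAt_fderiv_comp_apply ((hasDerivAt_id a).prodMk (hasDerivAt_const a b))
    (hasDerivAt_const a ((1 : 𝕜), (0 : 𝕜))) hp').deriv

theorem deriv_partial_snd_fst :
    deriv (fun s => deriv (fun r => p (s, r)) b) a
      = fderiv 𝕜 (fderiv 𝕜 p) (a, b) (1, 0) (0, 1) := by
  have hslice : ∀ᶠ s in 𝓝 a, DifferentiableAt 𝕜 p (s, b) :=
    (Continuous.prodMk_left b).continuousAt.eventually hp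
  have hpartial : (fun s => deriv (fun r => p (s, r)) b)
      =ᶠ[𝓝 a] fun s => fderiv 𝕜 p (s, b) (0, 1) :=
    hslice.mono fun s hs => (hasDerivAt_partial_snd hs).deriv
  rw [hpartial.deriv_eq]
  simpa using (hasDerivAt_fderiv_comp_apply ((hasDerivAt_id a).prodMk (hasDerivAt_const a b))
    (hasDerivAt_const a ((0 : 𝕜), (1 : 𝕜))) hp').deriv

theorem deriv_partial_snd_snd :
    deriv (fun s => deriv (fun r => p (a, r)) s) b
      = fderiv 𝕜 (fderiv 𝕜 p) (a, b) (0, 1) (0, 1) := by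
  have hslice : ∀ᶠ s in 𝓝 b, DifferentiableAt 𝕜 p (a, s) :=
    (Continuous.prodMk_right a).continuousAt.eventually hp
  have hpartial : (fun s => deriv (fun r => p (a, r)) s)
      =ᶠ[𝓝 b] fun s => fderiv 𝕜 p (a, s) (0, 1) :=
    hslice.mono fun s hs => (hasDerivAt_partial_snd hs).deriv
  rw [hpartial.deriv_eq]
  simpa using (hasDerivAt_fderiv_comp_apply ((hasDerivAt_const b a).prodMk (hasDerivAt_id b))
    (hasDerivAt_const b ((0 : 𝕜), (1 : 𝕜))) hp').deriv

end PartialDerivatives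

section LevelCurve

variable {p : 𝕜 × 𝕜 → F} {X : 𝕜 → 𝕜} {y₀ : 𝕜} {ε : F}
  (hX : ∀ᶠ y in 𝓝 y₀, DifferentiableAt 𝕜 X y)
  (hp : ∀ᶠ z in 𝓝 (X y₀, y₀), DifferentiableAt 𝕜 p z)
  (hlev : ∀ᶠ y in 𝓝 y₀, p (X y, y) = ε)
include hX hp hlev

theorem eventually_fderiv_apply_tangent_eq_zero :
    ∀ᶠ y in 𝓝 y₀, fderiv 𝕜 p (X y, y) (deriv X y, 1) = 0 := by
  have hgraph : ∀ᶠ y in 𝓝 y₀, DifferentiableAt 𝕜 p (X y, y) :=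
    (hX.self_of_nhds.continuousAt.prodMk continuousAt_id).eventually hp
  filter_upwards [hX, hgraph, hlev.eventually_nhds] with y hXy hpy hlevy
  have hcurve : HasDerivAt (fun y => p (X y, y)) (fderiv 𝕜 p (X y, y) (deriv X y, 1)) y :=
    hpy.hasFDerivAt.comp_hasDerivAt (f := fun s => (X s, s)) y
      (hXy.hasDerivAt.prodMk (hasDerivAt_id' y))
  rw [← hcurve.deriv, EventuallyEq.deriv_eq (f := fun _ => ε) hlevy, deriv_const]

theorem fderiv_fderiv_tangent_add_fderiv_eq_zero (hX' : DifferentiableAt 𝕜 (deriv X) y₀)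
    (hp' : DifferentiableAt 𝕜 (fderiv 𝕜 p) (X y₀, y₀)) :
    fderiv 𝕜 (fderiv 𝕜 p) (X y₀, y₀) (deriv X y₀, 1) (deriv X y₀, 1)
      + fderiv 𝕜 p (X y₀, y₀) (deriv (deriv X) y₀, 0) = 0 := by
  have hsecond := hasDerivAt_fderiv_comp_apply
    (hX.self_of_nhds.hasDerivAt.prodMk (hasDerivAt_id' y₀))
    (hX'.hasDerivAt.prodMk (hasDerivAt_const y₀ (1 : 𝕜))) hp'
  rw [← hsecond.deriv, EventuallyEq.deriv_eq (f := fun _ => 0)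
    (eventually_fderiv_apply_tangent_eq_zero hX hp hlev), deriv_const]

end LevelCurve

theorem levelset_equation_general (m c ε : ℝ) (α : ℝ → ℝ)
    (X : ℝ → ℝ) (y₀ : ℝ) (p : ℝ × ℝ → ℝ)
    (hX : ∀ᶠ y in nhds y₀, DifferentiableAt ℝ X y)
    (hX2 : DifferentiableAt ℝ (deriv X) y₀)
    (hp : ContDiffAt ℝ 2 p (X y₀, y₀))
    (hlev : ∀ᶠ y in nhds y₀, p (X y, y) = ε)
    (heq : -(m * p (X y₀, y₀)) *
          (deriv (fun s => deriv (fun r => p (r, y₀)) s) (X y₀)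
            + deriv (fun s => deriv (fun r => p (X y₀, r)) s) y₀)
        + (c + α y₀) * deriv (fun s => p (s, y₀)) (X y₀)
      = (deriv (fun s => p (s, y₀)) (X y₀)) ^ 2
        + (deriv (fun s => p (X y₀, s)) y₀) ^ 2) :
    m * ε * deriv (fun s => p (s, y₀)) (X y₀) * deriv (deriv X) y₀
      - m * ε * (deriv (fun s => deriv (fun r => p (r, y₀)) s) (X y₀)
            * (1 - (deriv X y₀) ^ 2)
          - 2 * deriv (fun s => deriv (fun r => p (s, r)) y₀) (X y₀)
            * deriv X y₀)
      + (c + α y₀) * deriv (fun s => p (s, y₀)) (X y₀)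
    = (deriv (fun s => p (s, y₀)) (X y₀)) ^ 2 * (1 + (deriv X y₀) ^ 2) := by
  have hd : ∀ᶠ z in 𝓝 (X y₀, y₀), DifferentiableAt ℝ p z :=
    (hp.eventually (by simp)).mono fun z hz => hz.differentiableAt two_ne_zero
  have hd' : DifferentiableAt ℝ (fderiv ℝ p) (X y₀, y₀) :=
    (hp.fderiv_right (m := 1) (by norm_num)).differentiableAt one_ne_zero
  have hsymm : fderiv ℝ (fderiv ℝ p) (X y₀, y₀) (0, 1) (1, 0)
      = fderiv ℝ (fderiv ℝ p) (X y₀, y₀) (1, 0) (0, 1) :=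
    hp.isSymmSndFDerivAt (by simp [minSmoothness_of_isRCLikeNormedField]) _ _
  have hfirst := (eventually_fderiv_apply_tangent_eq_zero hX hd hlev).self_of_nhds
  have hsecond := fderiv_fderiv_tangent_add_fderiv_eq_zero hX hd hlev hX2 hd'
  rw [ContinuousLinearMap.apply_pair] at hfirst
  rw [ContinuousLinearMap.apply_pair_apply_pair,
    (fderiv ℝ p (X y₀, y₀)).apply_pair (deriv (deriv X) y₀)] at hsecond
  simp only [smul_eq_mul] at hfirst hsecond
  rw [hlev.self_of_nhds, (hasDerivAt_partial_fst hd.self_of_nhds).deriv,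
    (hasDerivAt_partial_snd hd.self_of_nhds).deriv, deriv_partial_fst_fst hd hd',
    deriv_partial_snd_snd hd hd'] at heq
  rw [(hasDerivAt_partial_fst hd.self_of_nhds).deriv, deriv_partial_fst_fst hd hd',
    deriv_partial_snd_fst hd hd']
  linear_combination heq + m * ε * hsecond - m * ε * deriv X y₀ * hsymm
    + (fderiv ℝ p (X y₀, y₀) (0, 1) - fderiv ℝ p (X y₀, y₀) (1, 0) * deriv X y₀) * hfirst

/-- Levelset equation for classical solutions (identity (4.2)): if
`p(X(y), y) = ε > 0` near `y₀`, `X` is twice differentiable at `y₀`, `p` is `C²`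
near `(X(y₀), y₀)` and satisfies `−m·p·Δp + (c + α(y₀))·∂ₓp = |∇p|²` at
`(X(y₀), y₀)`, then, with `D := ∂ₓp(X(y₀), y₀)`,
`m·ε·D·X'' − m·ε·[∂²ₓₓp·(1 − X'²) − 2·∂²ₓᵧp·X'] + (c + α(y₀))·D = D²·(1 + X'²)`. -/
theorem levelset_equation (m c ε : ℝ) (hm : 0 < m) (hε : 0 < ε) (α : ℝ → ℝ)
    (X : ℝ → ℝ) (y₀ : ℝ) (p : ℝ × ℝ → ℝ)
    (hX : ∀ᶠ y in nhds y₀, DifferentiableAt ℝ X y)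
    (hX2 : DifferentiableAt ℝ (deriv X) y₀)
    (hp : ContDiffAt ℝ 2 p (X y₀, y₀))
    (hlev : ∀ᶠ y in nhds y₀, p (X y, y) = ε)
    (heq : -(m * p (X y₀, y₀)) *
          (deriv (fun s => deriv (fun r => p (r, y₀)) s) (X y₀)
            + deriv (fun s => deriv (fun r => p (X y₀, r)) s) y₀)
        + (c + α y₀) * deriv (fun s => p (s, y₀)) (X y₀)
      = (deriv (fun s => p (s, y₀)) (X y₀)) ^ 2
        + (deriv (fun s => p (X y₀, s)) y₀) ^ 2) :
    m * ε * deriv (fun s => p (s, y₀)) (X y₀) * deriv (deriv X) y₀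
      - m * ε * (deriv (fun s => deriv (fun r => p (r, y₀)) s) (X y₀)
            * (1 - (deriv X y₀) ^ 2)
          - 2 * deriv (fun s => deriv (fun r => p (s, r)) y₀) (X y₀)
            * deriv X y₀)
      + (c + α y₀) * deriv (fun s => p (s, y₀)) (X y₀)
    = (deriv (fun s => p (s, y₀)) (X y₀)) ^ 2 * (1 + (deriv X y₀) ^ 2) :=
  levelset_equation_general m c ε α X y₀ p hX hX2 hp hlev heq
end

section
/- Frontier section at a continuity point (Theorem 1.1(b)): Let I : ℝ → ℝ be bounded and upper semicontinuous, let U := { (x,y) ∈ ℝ² : x > I(y) }, and let Γ be the topological frontier of U in ℝ². If I is continuous at y₀, then { x ∈ ℝ : (x, y₀) ∈ Γ } = { I(y₀) }. -/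
/-- Frontier section at a continuity point (Theorem 1.1(b)): for `I` bounded and
upper semicontinuous, `U = {(x,y) : x > I(y)}` and `Γ = frontier U`, if `I` is
continuous at `y₀` then the section `{x : (x, y₀) ∈ Γ}` is exactly `{I(y₀)}`. -/
theorem frontier_section_continuity_point (I : ℝ → ℝ)
    (hbd : ∃ M : ℝ, ∀ y : ℝ, |I y| ≤ M)
    (husc : UpperSemicontinuous I) (y₀ : ℝ) (hcont : ContinuousAt I y₀) :
    {x : ℝ | (x, y₀) ∈ frontier {q : ℝ × ℝ | I q.2 < q.1}} = {I y₀} := by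
  set U : Set (ℝ × ℝ) := {q : ℝ × ℝ | I q.2 < q.1} with hUdef
  have hopen : IsOpen U := by
    rw [isOpen_iff_mem_nhds]
    rintro ⟨x, y⟩ hq
    simp only [hUdef, Set.mem_setOf_eq] at hq
    have h1 : ∀ᶠ y' in nhds y, I y' < (I y + x) / 2 :=
      husc y ((I y + x) / 2) (by linarith)
    have h2 : ∀ᶠ x' in nhds x, (I y + x) / 2 < x' := eventually_gt_nhds (by linarith)
    rw [nhds_prod_eq]
    filter_upwards [Filter.prod_mem_prod h2 h1] with p hp
    simp only [Set.mem_prod, Set.mem_setOf_eq] at hp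
    exact lt_trans hp.2 hp.1
  have hfr : frontier U = closure U \ U := hopen.frontier_eq
  ext x
  simp only [Set.mem_setOf_eq, Set.mem_singleton_iff, hfr, Set.mem_diff]
  constructor
  · rintro ⟨hcl, hnU⟩
    have hle : x ≤ I y₀ := by
      by_contra h
      exact hnU (by simpa [hUdef] using lt_of_not_ge h)
    rcases eq_or_lt_of_le hle with h | h
    · exact h
    · exfalso
      -- x < I y₀ : a neighborhood of (x, y₀) misses U
      set m := (x + I y₀) / 2 with hm
      have h1 : ∀ᶠ y' in nhds y₀, m < I y' :=
        hcont.eventually (eventually_gt_nhds (by simp [hm]; linarith))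
      have h2 : ∀ᶠ x' in nhds x, x' < m := eventually_lt_nhds (by simp [hm]; linarith)
      have hmem : ∀ᶠ p : ℝ × ℝ in nhds (x, y₀), p ∉ U := by
        rw [nhds_prod_eq]
        filter_upwards [Filter.prod_mem_prod h2 h1] with p hp
        simp only [Set.mem_prod, Set.mem_setOf_eq] at hp
        simp only [hUdef, Set.mem_setOf_eq, not_lt]
        exact le_of_lt (lt_trans hp.1 hp.2)
      rw [mem_closure_iff_nhds] at hcl
      obtain ⟨p, hp1, hp2⟩ := hcl _ hmem
      exact hp1 hp2
  · rintro rfl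
    constructor
    · have hsub : Set.Ioi (I y₀) ×ˢ ({y₀} : Set ℝ) ⊆ U := by
        rintro ⟨a, b⟩ ⟨ha, hb⟩
        simp only [Set.mem_singleton_iff] at hb
        simp only [hUdef, Set.mem_setOf_eq, hb]
        exact ha
      have := closure_mono hsub
      apply this
      rw [closure_prod_eq, closure_Ioi]
      exact ⟨Set.self_mem_Ici, by simp⟩
    · simp [hUdef]
end

section
/- Frontier section at a general (possibly discontinuity) point (Theorem 1.1(c)): Let I : ℝ → ℝ be bounded and upper semicontinuous, let U := { (x,y) ∈ ℝ² : x > I(y) }, and let Γ be the topological frontier of U in ℝ². Fix y₀ ∈ ℝ and set underline I(y₀) := liminf_{y → y₀, y ≠ y₀} I(y). Then underline I(y₀) ≤ I(y₀), and { x ∈ ℝ : (x, y₀) ∈ Γ } is exactly the closed interval [underline I(y₀), I(y₀)]. -/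
open Filter Topology

/-- Frontier section at a general (possibly discontinuity) point
(Theorem 1.1(c)): for `I` bounded and upper semicontinuous,
`U = {(x,y) : x > I(y)}`, `Γ = frontier U` and
`underline I(y₀) = liminf_{y → y₀, y ≠ y₀} I(y)`, one has
`underline I(y₀) ≤ I(y₀)` and the section `{x : (x, y₀) ∈ Γ}` is exactly the
closed interval `[underline I(y₀), I(y₀)]`. -/
theorem frontier_section_general_point (I : ℝ → ℝ)
    (hbd : ∃ M : ℝ, ∀ y : ℝ, |I y| ≤ M)
    (husc : UpperSemicontinuous I) (y₀ : ℝ) :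
    liminf I (nhdsWithin y₀ {y₀}ᶜ) ≤ I y₀ ∧
    {x : ℝ | (x, y₀) ∈ frontier {q : ℝ × ℝ | I q.2 < q.1}} =
      Set.Icc (liminf I (nhdsWithin y₀ {y₀}ᶜ)) (I y₀) := by
  obtain ⟨M, hM⟩ := hbd
  set F : Filter ℝ := nhdsWithin y₀ {y₀}ᶜ with hFdef
  have hFne : F.NeBot := by
    rw [hFdef]
    exact Filter.NeBot.mono (by infer_instance) le_rfl
  have hbdd_le : F.IsBoundedUnder (· ≤ ·) I :=
    ⟨M, eventually_map.2 (Eventually.of_forall fun y => (abs_le.1 (hM y)).2)⟩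
  have hbdd_ge : F.IsBoundedUnder (· ≥ ·) I :=
    ⟨-M, eventually_map.2 (Eventually.of_forall fun y => (abs_le.1 (hM y)).1)⟩
  set L : ℝ := liminf I F with hLdef
  -- Part 1: L ≤ I y₀
  have hL : L ≤ I y₀ := by
    refine le_of_forall_pos_le_add fun ε hε => ?_
    have h1 : ∀ᶠ y in F, I y < I y₀ + ε :=
      (husc y₀ _ (lt_add_of_pos_right _ hε)).filter_mono nhdsWithin_le_nhds
    exact liminf_le_of_frequently_le (h1.mono fun y hy => hy.le).frequently hbdd_ge
  -- U is open
  have hUopen : IsOpen {q : ℝ × ℝ | I q.2 < q.1} := by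
    rw [isOpen_iff_mem_nhds]
    rintro ⟨x, y⟩ hxy
    simp only [Set.mem_setOf_eq] at hxy
    have h2 : {y' | I y' < (I y + x) / 2} ∈ 𝓝 y := husc y _ (by linarith)
    have h3 : Set.Ioi ((I y + x) / 2) ∈ 𝓝 x := Ioi_mem_nhds (by linarith)
    filter_upwards [prod_mem_nhds h3 h2] with q hq
    exact hq.2.trans hq.1
  -- Points with x ≥ L are in the closure
  have hclos : ∀ x : ℝ, L ≤ x → (x, y₀) ∈ closure {q : ℝ × ℝ | I q.2 < q.1} := by
    intro x hx
    rw [mem_closure_iff_nhds]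
    intro W hW
    obtain ⟨u, hu, v, hv, huv⟩ := mem_nhds_prod_iff.1 hW
    obtain ⟨ε, hε, hball⟩ := Metric.mem_nhds_iff.1 hu
    have hfreq : ∃ᶠ y in F, I y < L + ε / 2 :=
      frequently_lt_of_liminf_lt hbdd_le.isCoboundedUnder_ge (by linarith)
    have hvF : v ∈ F := nhdsWithin_le_nhds hv
    obtain ⟨y, hyI, hyv⟩ := (hfreq.and_eventually (eventually_of_mem hvF fun y hy => hy)).exists
    refine ⟨(x + ε / 2, y), huv ⟨?_, hyv⟩, ?_⟩
    · refine hball ?_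
      rw [Metric.mem_ball, Real.dist_eq, show x + ε / 2 - x = ε / 2 by ring,
        abs_of_pos (by linarith)]
      linarith
    · show I y < x + ε / 2
      linarith
  refine ⟨hL, Set.Subset.antisymm ?_ ?_⟩
  · -- frontier section ⊆ Icc
    intro x hx
    rw [Set.mem_setOf_eq, hUopen.frontier_eq, Set.mem_diff, Set.mem_setOf_eq, not_lt] at hx
    obtain ⟨hxc, hxle⟩ := hx
    refine ⟨?_, hxle⟩
    by_contra hlt
    push_neg at hlt
    set c : ℝ := (x + L) / 2 with hcdef
    have hxc' : x < c := by rw [hcdef]; linarith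
    have hcL : c < L := by rw [hcdef]; linarith
    have hcy₀ : c < I y₀ := lt_of_lt_of_le hcL hL
    have hev : ∀ᶠ y in F, c < I y := eventually_lt_of_lt_liminf hcL hbdd_ge
    rw [hFdef, eventually_nhdsWithin_iff] at hev
    have hev' : ∀ᶠ y in 𝓝 y₀, c < I y := by
      filter_upwards [hev] with y hy
      by_cases h : y = y₀
      · subst h; exact hcy₀
      · exact hy h
    obtain ⟨q, hq1, hq2⟩ := mem_closure_iff_nhds.1 hxc _
      (prod_mem_nhds (Iio_mem_nhds hxc') hev')
    have h1 : q.1 < c := hq1.1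
    have h2 : c < I q.2 := hq1.2
    have h3 : I q.2 < q.1 := hq2
    linarith
  · -- Icc ⊆ frontier section
    intro x hx
    rw [Set.mem_setOf_eq, hUopen.frontier_eq, Set.mem_diff]
    exact ⟨hclos x hx.1, by simp only [Set.mem_setOf_eq, not_lt]; exact hx.2⟩
end
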